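/- Under the stated assumptions there exists a constant C > 0 such that for every x ∈ ℝ^d and every τ ∈ (0, t_max), the proximal point p_τ := prox_{τG}(x) satisfies ‖(1/τ)(x − p_τ)‖ ≤ φ(‖x‖) + C, where φ(s) := sup { ‖p‖ : ‖z‖ ≤ s, p ∈ ∂G(z) }. -/

import Mathlib

open Set Filter

lemma residual_mem_regSubgrad' {d : ℕ} (G : EuclideanSpace ℝ (Fin d) → ℝ)
    (τ : ℝ) (hτ : 0 < τ) (x p : EuclideanSpace ℝ (Fin d))
    (hp : ∀ y, G p + ‖x - p‖ ^ 2 / (2 * τ) ≤ G y + ‖x - y‖ ^ 2 / (2 * τ)) :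
    ∀ ε > (0 : ℝ), ∀ᶠ y in nhds p,
      G p + (inner ℝ (τ⁻¹ • (x - p)) (y - p) : ℝ) - ε * ‖y - p‖ ≤ G y := by
  intro ε hε
  filter_upwards [Metric.ball_mem_nhds p (by positivity : (0:ℝ) < 2 * ε * τ)] with y hy
  have hy' : ‖y - p‖ < 2 * ε * τ := by simpa [dist_eq_norm] using hy
  have h1 := hp y
  have hexp : ‖x - y‖ ^ 2 = ‖x - p‖ ^ 2 - 2 * (inner ℝ (x - p) (y - p) : ℝ) + ‖y - p‖ ^ 2 := by
    have : x - y = (x - p) - (y - p) := by abel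
    rw [this, norm_sub_sq_real]
  have hin : (inner ℝ (τ⁻¹ • (x - p)) (y - p) : ℝ) = τ⁻¹ * (inner ℝ (x - p) (y - p) : ℝ) :=
    real_inner_smul_left _ _ _
  have hnn : 0 ≤ ‖y - p‖ := norm_nonneg _
  rw [hin]
  rw [hexp] at h1
  have h2τ : 0 < 2 * τ := by positivity
  have key : ‖y - p‖ ^ 2 / (2 * τ) ≤ ε * ‖y - p‖ := by
    rw [div_le_iff₀ h2τ]; nlinarith
  set I : ℝ := (inner ℝ (x - p) (y - p) : ℝ) with hI
  have hsplit : (‖x - p‖ ^ 2 - 2 * I + ‖y - p‖ ^ 2) / (2 * τ)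
      = ‖x - p‖ ^ 2 / (2 * τ) - τ⁻¹ * I + ‖y - p‖ ^ 2 / (2 * τ) := by
    field_simp
  rw [hsplit] at h1
  linarith

/-- The regular (Fréchet) subdifferential of `G` at `z`. -/
def regSubgrad {d : ℕ} (G : EuclideanSpace ℝ (Fin d) → ℝ) (z : EuclideanSpace ℝ (Fin d)) :
    Set (EuclideanSpace ℝ (Fin d)) :=
  {p | ∀ ε > (0 : ℝ), ∀ᶠ y in nhds z,
    G z + (inner ℝ p (y - z) : ℝ) - ε * ‖y - z‖ ≤ G y}

/-- `φ(s) := sup { ‖p‖ : ‖z‖ ≤ s, p ∈ ∂G(z) }`. -/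
noncomputable def phiSup {d : ℕ} (G : EuclideanSpace ℝ (Fin d) → ℝ) (s : ℝ) : ℝ :=
  sSup {r : ℝ | ∃ z p : EuclideanSpace ℝ (Fin d), ‖z‖ ≤ s ∧ p ∈ regSubgrad G z ∧ r = ‖p‖}

/-- there exists `C > 0` such that for every `x` and every `τ ∈ (0, t_max)`,
the proximal point `p_τ := prox_{τG}(x)` satisfies `‖(1/τ)(x - p_τ)‖ ≤ φ(‖x‖) + C`. -/
theorem prox_residual_bound {d : ℕ}
    (G : EuclideanSpace ℝ (Fin d) → ℝ)
    (hGcont : Continuous G)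
    (hGcoercive : ∀ r : ℝ, ∃ R : ℝ, ∀ y : EuclideanSpace ℝ (Fin d), R ≤ ‖y‖ → r ≤ G y)
    (hGbddBelow : ∃ m : ℝ, ∀ y : EuclideanSpace ℝ (Fin d), m ≤ G y)
    (hφbdd : ∀ s : ℝ, BddAbove
      {r : ℝ | ∃ z p : EuclideanSpace ℝ (Fin d), ‖z‖ ≤ s ∧ p ∈ regSubgrad G z ∧ r = ‖p‖})
    (tmax : ℝ) (htmax : 0 < tmax)
    (P : ℝ → EuclideanSpace ℝ (Fin d) → EuclideanSpace ℝ (Fin d))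
    (hPmin : ∀ τ ∈ Set.Ioo (0 : ℝ) tmax, ∀ x y : EuclideanSpace ℝ (Fin d),
      G (P τ x) + ‖x - P τ x‖ ^ 2 / (2 * τ) ≤ G y + ‖x - y‖ ^ 2 / (2 * τ))
    (hPuniq : ∀ τ ∈ Set.Ioo (0 : ℝ) tmax, ∀ x q : EuclideanSpace ℝ (Fin d),
      (∀ y : EuclideanSpace ℝ (Fin d),
        G q + ‖x - q‖ ^ 2 / (2 * τ) ≤ G y + ‖x - y‖ ^ 2 / (2 * τ)) → q = P τ x)
    (K : ℝ) (hK : 0 < K)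
    (hproxNorm : ∀ t : ℝ, 0 < t → ∀ x : EuclideanSpace ℝ (Fin d), K ≤ ‖x‖ →
      ∀ q : EuclideanSpace ℝ (Fin d),
        (∀ y : EuclideanSpace ℝ (Fin d),
          G q + ‖x - q‖ ^ 2 / (2 * t) ≤ G y + ‖x - y‖ ^ 2 / (2 * t)) → ‖q‖ ≤ ‖x‖) :
    ∃ C > (0 : ℝ), ∀ x : EuclideanSpace ℝ (Fin d), ∀ τ ∈ Set.Ioo (0 : ℝ) tmax,
      ‖τ⁻¹ • (x - P τ x)‖ ≤ phiSup G ‖x‖ + C := by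
  obtain ⟨m, hm⟩ := hGbddBelow
  -- upper bound of G on the closed ball of radius K
  obtain ⟨z0, _, hM'⟩ := (isCompact_closedBall (0 : EuclideanSpace ℝ (Fin d)) K).exists_isMaxOn
    ⟨0, by simp [hK.le]⟩ hGcont.continuousOn
  have hM : ∀ z ∈ Metric.closedBall (0 : EuclideanSpace ℝ (Fin d)) K, G z ≤ G z0 :=
    fun z hz => hM' hz
  set M : ℝ := G z0 with hMdef
  set R : ℝ := K + Real.sqrt (2 * tmax * (M - m)) with hRdef
  have hphi_nonneg : ∀ s : ℝ, 0 ≤ phiSup G s := by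
    intro s
    rcases Set.eq_empty_or_nonempty
      {r : ℝ | ∃ z p : EuclideanSpace ℝ (Fin d), ‖z‖ ≤ s ∧ p ∈ regSubgrad G z ∧ r = ‖p‖} with he | hne
    · rw [phiSup, he, Real.sSup_empty]
    · obtain ⟨r, hr⟩ := hne
      have hr' := hr
      obtain ⟨z, p, _, _, hrp⟩ := hr'
      have : 0 ≤ r := hrp ▸ norm_nonneg p
      exact this.trans (le_csSup (hφbdd s) hr)
  refine ⟨phiSup G R + 1, by linarith [hphi_nonneg R], ?_⟩
  intro x τ hτ
  obtain ⟨hτ0, hτt⟩ := hτ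
  set p := P τ x with hpdef
  have hpmin : ∀ y, G p + ‖x - p‖ ^ 2 / (2 * τ) ≤ G y + ‖x - y‖ ^ 2 / (2 * τ) :=
    hPmin τ ⟨hτ0, hτt⟩ x
  have hres : τ⁻¹ • (x - p) ∈ regSubgrad G p :=
    residual_mem_regSubgrad' G τ hτ0 x p hpmin
  by_cases hx : K ≤ ‖x‖
  · have hpnorm : ‖p‖ ≤ ‖x‖ := hproxNorm τ hτ0 x hx p hpmin
    have : ‖τ⁻¹ • (x - p)‖ ≤ phiSup G ‖x‖ :=
      le_csSup (hφbdd ‖x‖) ⟨p, τ⁻¹ • (x - p), hpnorm, hres, rfl⟩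
    linarith [hphi_nonneg R]
  · push_neg at hx
    -- bound ‖p‖ by R
    have h1 := hpmin x
    simp only [sub_self, norm_zero] at h1
    have hGx_le : G x ≤ M := hM x (by simpa [Metric.mem_closedBall, dist_eq_norm] using hx.le)
    have hsq : ‖x - p‖ ^ 2 ≤ 2 * tmax * (M - m) := by
      have h2 : ‖x - p‖ ^ 2 / (2 * τ) ≤ M - m := by
        have := hm p
        have h0 : (0:ℝ) ^ 2 / (2 * τ) = 0 := by simp
        nlinarith
      have h3 : ‖x - p‖ ^ 2 ≤ 2 * τ * (M - m) := by
        rw [div_le_iff₀ (by positivity : (0:ℝ) < 2 * τ)] at h2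
        linarith [h2]
      have hMm : 0 ≤ M - m := by nlinarith [hm x]
      nlinarith
    have hxp : ‖x - p‖ ≤ Real.sqrt (2 * tmax * (M - m)) := by
      have := Real.sqrt_le_sqrt hsq
      rwa [Real.sqrt_sq (norm_nonneg _)] at this
    have hpR : ‖p‖ ≤ R := by
      have hpe : p = x - (x - p) := by abel
      have : ‖p‖ ≤ ‖x‖ + ‖x - p‖ := by
        have h := norm_sub_le x (x - p); rwa [← hpe] at h
      linarith
    have hb : ‖τ⁻¹ • (x - p)‖ ≤ phiSup G R :=
      le_csSup (hφbdd R) ⟨p, τ⁻¹ • (x - p), hpR, hres, rfl⟩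
    linarith [hphi_nonneg ‖x‖]
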